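/- arXiv:0705.0840 — 3 statements merged into one kernel-verified Lean document; each statement's English description precedes it below -/
import Mathlib

section
/- There is a constant C = C(n) such that for every dyadic cube Q in ℝⁿ and every h ∈ BMO(ℝⁿ), (1/|Q|) ∫_Q Σ_{k : 2^{-k} ≤ ℓ(Q)} |Δ_k h(x)|² dx ≤ C ‖h‖²_{BMO}. -/
open MeasureTheory Set
open scoped Classical

noncomputable section

/-- Axis-parallel cube in `ℝⁿ` with center `c` and "radius" (half side length) `r`. -/
def cubeSet (n : ℕ) (c : Fin n → ℝ) (r : ℝ) : Set (Fin n → ℝ) :=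
  {x | ∀ i, |x i - c i| ≤ r}

/-- Average `(1/|s|) ∫_s f` of `f` over the set `s` (Lebesgue measure). -/
def avgOn (n : ℕ) (s : Set (Fin n → ℝ)) (f : (Fin n → ℝ) → ℝ) : ℝ :=
  (volume s).toReal⁻¹ * ∫ x in s, f x

/-- A dyadic cube of generation `k` (side length `2^{-k}`) in `ℝⁿ`. -/
structure DyadicCube (n : ℕ) where
  k : ℤ
  m : Fin n → ℤ

/-- The underlying set of a dyadic cube. -/
def DyadicCube.set {n : ℕ} (Q : DyadicCube n) : Set (Fin n → ℝ) :=
  {x | ∀ i, (Q.m i : ℝ) ≤ (2:ℝ) ^ Q.k * x i ∧ (2:ℝ) ^ Q.k * x i < (Q.m i : ℝ) + 1}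

/-- Center of a dyadic cube. -/
def DyadicCube.center {n : ℕ} (Q : DyadicCube n) : Fin n → ℝ :=
  fun i => ((Q.m i : ℝ) + 1 / 2) * (2:ℝ) ^ (-Q.k)

/-- Concentric dilate `aQ` of a dyadic cube `Q`. -/
def DyadicCube.dilate {n : ℕ} (Q : DyadicCube n) (a : ℝ) : Set (Fin n → ℝ) :=
  cubeSet n Q.center (a * (2:ℝ) ^ (-Q.k) / 2)

/-- `Q'` is a dyadic child of `Q`. -/
def isChild {n : ℕ} (Q' Q : DyadicCube n) : Prop :=
  Q'.k = Q.k + 1 ∧ Q'.set ⊆ Q.set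

/-- The dyadic cube (as a set) of generation `k` containing `x`. -/
def dyadicPiece (n : ℕ) (k : ℤ) (x : Fin n → ℝ) : Set (Fin n → ℝ) :=
  {y | ∀ i, ⌊(2:ℝ) ^ k * y i⌋ = ⌊(2:ℝ) ^ k * x i⌋}

/-- The dyadic cube of generation `k` containing `x`. -/
def dyadicOf (n : ℕ) (k : ℤ) (x : Fin n → ℝ) : DyadicCube n :=
  ⟨k, fun i => ⌊(2:ℝ) ^ k * x i⌋⟩

/-- Dyadic conditional expectation `E_k f(x) = (1/|Q|)∫_Q f`, `Q ∈ 𝔻_k`, `x ∈ Q`. -/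
def Ek (n : ℕ) (k : ℤ) (f : (Fin n → ℝ) → ℝ) (x : Fin n → ℝ) : ℝ :=
  (2:ℝ) ^ (k * (n:ℤ)) * ∫ y in dyadicPiece n k x, f y

/-- Dyadic martingale difference `Δ_k = E_{k+1} - E_k`. -/
def MDk (n : ℕ) (k : ℤ) (f : (Fin n → ℝ) → ℝ) (x : Fin n → ℝ) : ℝ :=
  Ek n (k + 1) f x - Ek n k f x

/-- Adapted expectation `E_k^b f = E_k(fb)/E_k(b)`. -/
def Ekb (n : ℕ) (b : (Fin n → ℝ) → ℝ) (k : ℤ) (f : (Fin n → ℝ) → ℝ) (x : Fin n → ℝ) : ℝ :=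
  Ek n k (fun y => f y * b y) x / Ek n k b x

/-- Adapted martingale difference `Δ_k^b = E_{k+1}^b - E_k^b`. -/
def MDkb (n : ℕ) (b : (Fin n → ℝ) → ℝ) (k : ℤ) (f : (Fin n → ℝ) → ℝ) (x : Fin n → ℝ) : ℝ :=
  Ekb n b (k + 1) f x - Ekb n b k f x

/-- Transposed adapted expectation `A_k^b f = b ⋅ E_k f / E_k b`. -/
def Akb (n : ℕ) (b : (Fin n → ℝ) → ℝ) (k : ℤ) (f : (Fin n → ℝ) → ℝ) (x : Fin n → ℝ) : ℝ :=
  b x * Ek n k f x / Ek n k b x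

/-- `D_k^b = A_{k+1}^b - A_k^b`, the transpose of `Δ_k^b`. -/
def TDkb (n : ℕ) (b : (Fin n → ℝ) → ℝ) (k : ℤ) (f : (Fin n → ℝ) → ℝ) (x : Fin n → ℝ) : ℝ :=
  Akb n b (k + 1) f x - Akb n b k f x

/-- The operator `Λ_Q^b` with kernel `λ_Q^b(x,y)`, so that `Λ_Q^b (b g) = Δ_Q^b g`. -/
def Lam (n : ℕ) (b : (Fin n → ℝ) → ℝ) (Q : DyadicCube n) (h : (Fin n → ℝ) → ℝ)
    (x : Fin n → ℝ) : ℝ :=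
  Q.set.indicator
    (fun y => Ek n (Q.k + 1) h y / Ek n (Q.k + 1) b y - Ek n Q.k h y / Ek n Q.k b y) x

/-- The discrete sawtooth `Ω = R_{Q₁} ∖ (∪ⱼ R_{P_j})`. -/
def sawtooth (n : ℕ) {ι : Type} (Q₁ : DyadicCube n) (P : ι → DyadicCube n) :
    Set (DyadicCube n) :=
  {Q | Q.set ⊆ Q₁.set ∧ ∀ i, ¬ Q.set ⊆ (P i).set}

/-- `Ω₁`: cubes of `Ω` all of whose dyadic children lie in `Ω`. -/
def sawtoothGood (n : ℕ) {ι : Type} (Q₁ : DyadicCube n) (P : ι → DyadicCube n) :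
    Set (DyadicCube n) :=
  {Q ∈ sawtooth n Q₁ P | ∀ Q', isChild Q' Q → Q' ∈ sawtooth n Q₁ P}

/-- `Ω_buffer`: cubes of `Ω` with at least one dyadic child not in `Ω`. -/
def sawtoothBuffer (n : ℕ) {ι : Type} (Q₁ : DyadicCube n) (P : ι → DyadicCube n) :
    Set (DyadicCube n) :=
  {Q ∈ sawtooth n Q₁ P | ∃ Q', isChild Q' Q ∧ Q' ∉ sawtooth n Q₁ P}

/-- The Hardy–Littlewood maximal function. -/
def maximalFn (n : ℕ) (f : (Fin n → ℝ) → ℝ) (x : Fin n → ℝ) : ℝ :=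
  ⨆ r : {r : ℝ // 0 < r}, avgOn n (Metric.ball x r.1) (fun y => |f y|)

end

/-!
On a dyadic cube `R` of generation `k`, `Δ_{k+j} h` is constant on the cubes of generation
`k + j + 1`, so `∫_R ∑_{j<K} |Δ_{k+j} h|²` is the sum of `(⟨h⟩_S - ⟨h⟩_{S'})² |S|` over the
cubes `S ⊆ R` of depth `1, …, K`, `S'` being the parent of `S`. We bound it by `c |R|`, by
induction on `K` and a stopping time: descend from `R` as long as the averages stay within
`λ = 2N` of `z = ⟨h⟩_R`. Along the retained cubes the identity
`∑ (a_ε - z)² w_ε = ∑ (a_ε - a)² w_ε + (a - z)² ∑ w_ε` (with `a ∑ w_ε = ∑ a_ε w_ε`) telescopes,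
and since a child's average is within `2ⁿN` of its parent's, they contribute at most
`(λ + 2ⁿN)² |R|`. A stopped cube `S` has `λ |S| ≤ ∫_S |h - z|`, so the stopped cubes have total
measure at most `N |R| / λ = |R| / 2`, and by induction they carry at most `c` times their
measure. Hence `c = 2 (λ + 2ⁿN)²` works, and monotone convergence gives the full series.
-/

noncomputable section

lemma sum_sq_sub_mul_eq {ι : Type*} (s : Finset ι) (a w : ι → ℝ) (m z : ℝ)
    (hm : ∑ i ∈ s, a i * w i = m * ∑ i ∈ s, w i) :
    ∑ i ∈ s, (a i - z) ^ 2 * w i = ∑ i ∈ s, (a i - m) ^ 2 * w i + (m - z) ^ 2 * ∑ i ∈ s, w i := by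
  have hsplit : ∀ i, (a i - z) ^ 2 * w i =
      (a i - m) ^ 2 * w i + (m - z) ^ 2 * w i + 2 * (m - z) * (a i * w i - m * w i) :=
    fun i => by ring
  simp only [hsplit, Finset.sum_add_distrib, ← Finset.mul_sum, Finset.sum_sub_distrib, hm,
    sub_self, mul_zero, add_zero]

lemma measurable_Ek (n : ℕ) (k : ℤ) (h : (Fin n → ℝ) → ℝ) : Measurable (Ek n k h) := by
  have hfactor : Ek n k h = (fun m : Fin n → ℤ =>
      (2 : ℝ) ^ (k * (n : ℤ)) * ∫ y in {y | ∀ i, ⌊(2 : ℝ) ^ k * y i⌋ = m i}, h y) ∘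
      fun x i => ⌊(2 : ℝ) ^ k * x i⌋ := rfl
  rw [hfactor]
  exact (measurable_of_countable _).comp <| measurable_pi_lambda _ fun i =>
    Int.measurable_floor.comp (measurable_const.mul (measurable_pi_apply i))

namespace DyadicCube

variable {n : ℕ} {h : (Fin n → ℝ) → ℝ}

def vol (R : DyadicCube n) : ℝ := 2 ^ (-(R.k * n))

lemma vol_pos (R : DyadicCube n) : 0 < R.vol := zpow_pos two_pos _

def lower (R : DyadicCube n) : Fin n → ℝ := fun i => R.m i * 2 ^ (-R.k)

def upper (R : DyadicCube n) : Fin n → ℝ := fun i => (R.m i + 1) * 2 ^ (-R.k)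

lemma set_eq_pi (R : DyadicCube n) :
    R.set = univ.pi fun i => Ico (R.lower i) (R.upper i) := by
  have h2 : (0 : ℝ) < 2 ^ R.k := zpow_pos two_pos _
  ext x
  simp only [DyadicCube.set, lower, upper, mem_ofPred_eq, mem_univ_pi, mem_Ico, zpow_neg,
    ← div_eq_mul_inv, div_le_iff₀ h2, lt_div_iff₀ h2, mul_comm (x _)]

lemma measurableSet_set (R : DyadicCube n) : MeasurableSet R.set := by
  rw [set_eq_pi]
  exact .univ_pi fun _ => measurableSet_Ico

lemma volume_set (R : DyadicCube n) : volume R.set = ENNReal.ofReal R.vol := by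
  have side : ∀ i, R.upper i - R.lower i = 2 ^ (-R.k) := fun i => by simp only [lower, upper]; ring
  rw [set_eq_pi, Real.volume_pi_Ico]
  simp only [side, Finset.prod_const, Finset.card_univ, Fintype.card_fin]
  rw [← ENNReal.ofReal_pow (zpow_pos two_pos _).le, ← zpow_natCast, ← zpow_mul, vol, neg_mul]

lemma measureReal_set (R : DyadicCube n) : volume.real R.set = R.vol := by
  rw [measureReal_def, volume_set, ENNReal.toReal_ofReal R.vol_pos.le]

lemma cubeSet_center_eq_Icc (R : DyadicCube n) :
    cubeSet n R.center (2 ^ (-R.k) / 2) = Icc R.lower R.upper := by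
  ext x
  simp only [cubeSet, DyadicCube.center, lower, upper, mem_ofPred_eq, Pi.le_def, mem_Icc,
    abs_le, ← forall_and]
  refine forall_congr' fun i => and_congr ?_ ?_ <;> constructor <;> intro h <;> linarith

lemma set_ae_eq_cubeSet (R : DyadicCube n) :
    R.set =ᵐ[volume] cubeSet n R.center (2 ^ (-R.k) / 2) := by
  rw [set_eq_pi, cubeSet_center_eq_Icc]
  exact Measure.univ_pi_Ico_ae_eq_Icc

lemma integrableOn_set (hh : LocallyIntegrable h volume) (R : DyadicCube n) :
    IntegrableOn h R.set :=
  (hh.integrableOn_isCompact isCompact_Icc).mono_set <| by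
    rw [set_eq_pi, ← pi_univ_Icc]
    exact pi_mono fun _ _ => Ico_subset_Icc_self

lemma mem_set_iff_floor {R : DyadicCube n} {x : Fin n → ℝ} :
    x ∈ R.set ↔ ∀ i, ⌊(2 : ℝ) ^ R.k * x i⌋ = R.m i :=
  forall_congr' fun _ => Int.floor_eq_iff.symm

lemma dyadicOf_eq_of_mem {R : DyadicCube n} {x : Fin n → ℝ} (hx : x ∈ R.set) :
    dyadicOf n R.k x = R := by
  cases R
  simp only [dyadicOf, DyadicCube.mk.injEq, true_and]
  exact funext (mem_set_iff_floor.1 hx)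

def avg (h : (Fin n → ℝ) → ℝ) (R : DyadicCube n) : ℝ := 2 ^ (R.k * (n : ℤ)) * ∫ x in R.set, h x

lemma Ek_eq_avg_of_mem {R : DyadicCube n} {x : Fin n → ℝ} (hx : x ∈ R.set)
    (h : (Fin n → ℝ) → ℝ) : Ek n R.k h x = R.avg h := by
  have hpiece : dyadicPiece n R.k x = R.set := by
    ext y
    rw [mem_set_iff_floor, ← dyadicOf_eq_of_mem hx]
    rfl
  rw [Ek, hpiece, avg]

/-- The `2^n` dyadic children of `R`, indexed by the choice of lower or upper half in each
coordinate. -/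
def child (R : DyadicCube n) (ε : Fin n → Bool) : DyadicCube n :=
  ⟨R.k + 1, fun i => 2 * R.m i + (ε i).toNat⟩

@[simp] lemma child_k (R : DyadicCube n) (ε : Fin n → Bool) : (R.child ε).k = R.k + 1 := rfl

lemma mem_child_iff {R : DyadicCube n} {ε : Fin n → Bool} {x : Fin n → ℝ} :
    x ∈ (R.child ε).set ↔ ∀ i, 2 * R.m i + ((ε i).toNat : ℝ) ≤ 2 * (2 ^ R.k * x i) ∧
      2 * (2 ^ R.k * x i) < 2 * R.m i + (ε i).toNat + 1 := by
  simp only [DyadicCube.set, child, zpow_add_one₀ (two_ne_zero' ℝ), mem_ofPred_eq]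
  push_cast
  refine forall_congr' fun i => ?_
  ring_nf

lemma child_subset (R : DyadicCube n) (ε : Fin n → Bool) : (R.child ε).set ⊆ R.set := by
  intro x hx i
  obtain ⟨h₁, h₂⟩ := mem_child_iff.1 hx i
  have hε : ((ε i).toNat : ℝ) ≤ 1 := by exact_mod_cast Bool.toNat_le (ε i)
  constructor <;> linarith [Nat.cast_nonneg (α := ℝ) (ε i).toNat]

lemma mem_child_of_mem {R : DyadicCube n} {x : Fin n → ℝ} (hx : x ∈ R.set) :
    x ∈ (R.child fun i => decide (2 * (R.m i : ℝ) + 1 ≤ 2 * (2 ^ R.k * x i))).set := by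
  refine mem_child_iff.2 fun i => ?_
  obtain ⟨h₁, h₂⟩ := hx i
  by_cases hi : 2 * (R.m i : ℝ) + 1 ≤ 2 * (2 ^ R.k * x i)
  · simp only [hi, decide_true, Bool.toNat_true]
    constructor <;> push_cast <;> linarith
  · simp only [hi, decide_false, Bool.toNat_false]
    constructor <;> push_cast <;> linarith

lemma disjoint_child (R : DyadicCube n) {ε ε' : Fin n → Bool} (hne : ε ≠ ε') :
    Disjoint (R.child ε).set (R.child ε').set := by
  refine Set.disjoint_left.2 fun x hx hx' => hne (funext fun i => ?_)
  have hm := (mem_set_iff_floor.1 hx i).symm.trans (mem_set_iff_floor.1 hx' i)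
  simp only [child, add_right_inj, Nat.cast_inj] at hm
  revert hm
  cases ε i <;> cases ε' i <;> simp

lemma iUnion_child (R : DyadicCube n) : ⋃ ε, (R.child ε).set = R.set :=
  (iUnion_subset R.child_subset).antisymm fun _ hx => mem_iUnion.2 ⟨_, mem_child_of_mem hx⟩

lemma pow_mul_vol_child (R : DyadicCube n) (ε : Fin n → Bool) :
    2 ^ n * (R.child ε).vol = R.vol := by
  rw [vol, vol, child_k, ← zpow_natCast, ← zpow_add₀ two_ne_zero]
  ring_nf

lemma sum_vol_child (R : DyadicCube n) : ∑ ε, (R.child ε).vol = R.vol := by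
  calc ∑ ε, (R.child ε).vol = ∑ _ε : Fin n → Bool, (R.child fun _ => false).vol := rfl
    _ = R.vol := by
      rw [Finset.sum_const, Finset.card_univ, Fintype.card_fun, Fintype.card_bool,
        Fintype.card_fin, nsmul_eq_mul, Nat.cast_pow, Nat.cast_ofNat, pow_mul_vol_child]

lemma integral_eq_sum_child (R : DyadicCube n) {f : (Fin n → ℝ) → ℝ}
    (hf : IntegrableOn f R.set) : ∫ x in R.set, f x = ∑ ε, ∫ x in (R.child ε).set, f x := by
  conv_lhs => rw [← iUnion_child]
  exact integral_iUnion_fintype (fun _ => measurableSet_set _) (fun _ _ => R.disjoint_child)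
    fun ε => hf.mono_set (R.child_subset ε)

lemma avg_mul_vol (h : (Fin n → ℝ) → ℝ) (R : DyadicCube n) :
    R.avg h * R.vol = ∫ x in R.set, h x := by
  rw [avg, vol, mul_right_comm, ← zpow_add₀ two_ne_zero, add_neg_cancel, zpow_zero, one_mul]

lemma sum_avg_child_mul_vol (R : DyadicCube n) (hh : IntegrableOn h R.set) :
    ∑ ε, (R.child ε).avg h * (R.child ε).vol = R.avg h * R.vol := by
  simp only [avg_mul_vol, R.integral_eq_sum_child hh]

lemma avgOn_cubeSet_center (R : DyadicCube n) (f : (Fin n → ℝ) → ℝ) :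
    avgOn n (cubeSet n R.center (2 ^ (-R.k) / 2)) f = R.avg f := by
  rw [avgOn, ← measure_congr R.set_ae_eq_cubeSet, ← setIntegral_congr_set R.set_ae_eq_cubeSet,
    volume_set, ENNReal.toReal_ofReal R.vol_pos.le, vol, ← zpow_neg, neg_neg, avg]

lemma abs_avg_sub_mul_vol_le (R : DyadicCube n) (hh : IntegrableOn h R.set) (z : ℝ) :
    |R.avg h - z| * R.vol ≤ ∫ x in R.set, |h x - z| := by
  have hz : IntegrableOn (fun _ => z) R.set := integrableOn_const (by simp [volume_set])
  calc |R.avg h - z| * R.vol = |∫ x in R.set, (h x - z)| := by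
        rw [integral_sub hh hz, setIntegral_const, measureReal_set, smul_eq_mul, mul_comm _ z,
          ← avg_mul_vol, ← sub_mul, abs_mul, abs_of_pos R.vol_pos]
    _ ≤ ∫ x in R.set, |h x - z| := abs_integral_le_integral_abs

lemma integral_abs_sub_avg_le {N : ℝ}
    (hbmo : ∀ (c : Fin n → ℝ) (r : ℝ), 0 < r →
      avgOn n (cubeSet n c r) (fun x => |h x - avgOn n (cubeSet n c r) h|) ≤ N)
    (R : DyadicCube n) : ∫ x in R.set, |h x - R.avg h| ≤ N * R.vol := by
  have hR := hbmo R.center (2 ^ (-R.k) / 2) (by positivity)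
  rw [avgOn_cubeSet_center, avgOn_cubeSet_center, avg, ← le_div_iff₀' (zpow_pos two_pos _),
    div_eq_mul_inv, ← zpow_neg, ← vol] at hR
  exact hR

lemma integrableOn_abs_sub (hh : LocallyIntegrable h volume) (R : DyadicCube n) (z : ℝ) :
    IntegrableOn (fun x => |h x - z|) R.set :=
  ((integrableOn_set hh R).sub (integrableOn_const (by simp [volume_set]))).abs

lemma abs_avg_child_sub_le (hh : LocallyIntegrable h volume) {N : ℝ}
    (hbmo : ∀ R : DyadicCube n, ∫ x in R.set, |h x - R.avg h| ≤ N * R.vol)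
    (R : DyadicCube n) (ε : Fin n → Bool) : |(R.child ε).avg h - R.avg h| ≤ 2 ^ n * N := by
  refine le_of_mul_le_mul_right ?_ (R.child ε).vol_pos
  calc |(R.child ε).avg h - R.avg h| * (R.child ε).vol
      ≤ ∫ x in (R.child ε).set, |h x - R.avg h| :=
        abs_avg_sub_mul_vol_le _ (integrableOn_set hh _) _
    _ ≤ ∫ x in R.set, |h x - R.avg h| :=
        setIntegral_mono_set (integrableOn_abs_sub hh R _) (.of_forall fun _ => abs_nonneg _)
          (R.child_subset ε).eventuallyLE
    _ ≤ N * R.vol := hbmo R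
    _ = 2 ^ n * N * (R.child ε).vol := by rw [← pow_mul_vol_child R ε]; ring

lemma MDk_eq_of_mem_child {R : DyadicCube n} {ε : Fin n → Bool} {x : Fin n → ℝ}
    (hx : x ∈ (R.child ε).set) : MDk n R.k h x = (R.child ε).avg h - R.avg h := by
  rw [MDk, ← child_k R ε, Ek_eq_avg_of_mem hx, Ek_eq_avg_of_mem (R.child_subset ε hx)]

lemma integrableOn_sq_MDk (j : ℕ) (R : DyadicCube n) :
    IntegrableOn (fun x => MDk n (R.k + j) h x ^ 2) R.set := by
  induction j generalizing R with
  | zero =>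
    rw [← iUnion_child]
    refine integrableOn_finite_iUnion.2 fun ε => ?_
    refine (integrableOn_const (C := ((R.child ε).avg h - R.avg h) ^ 2) ?_).congr_fun
      (fun x hx => ?_) (measurableSet_set _)
    · simp [volume_set]
    · simp only [CharP.cast_eq_zero, add_zero, MDk_eq_of_mem_child hx]
  | succ j ih =>
    rw [← iUnion_child]
    refine integrableOn_finite_iUnion.2 fun ε => ?_
    convert ih (R.child ε) using 4
    rw [child_k]
    push_cast
    ring

def squareSum (h : (Fin n → ℝ) → ℝ) (K : ℕ) (R : DyadicCube n) : ℝ :=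
  ∑ j ∈ Finset.range K, ∫ x in R.set, MDk n (R.k + j) h x ^ 2

lemma squareSum_succ (K : ℕ) (R : DyadicCube n) :
    squareSum h (K + 1) R = ∑ ε, ((R.child ε).avg h - R.avg h) ^ 2 * (R.child ε).vol +
      ∑ ε, squareSum h K (R.child ε) := by
  have top : ∫ x in R.set, MDk n R.k h x ^ 2 =
      ∑ ε, ((R.child ε).avg h - R.avg h) ^ 2 * (R.child ε).vol := by
    rw [integral_eq_sum_child R (by simpa using integrableOn_sq_MDk (h := h) 0 R)]
    refine Finset.sum_congr rfl fun ε _ => ?_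
    rw [setIntegral_congr_fun (g := fun _ => ((R.child ε).avg h - R.avg h) ^ 2)
      (measurableSet_set _) fun x hx => by simp only [MDk_eq_of_mem_child hx],
      setIntegral_const, measureReal_set, smul_eq_mul, mul_comm]
  have deeper : ∀ j : ℕ, ∫ x in R.set, MDk n (R.k + (j + 1 : ℕ)) h x ^ 2 =
      ∑ ε, ∫ x in (R.child ε).set, MDk n ((R.child ε).k + j) h x ^ 2 := fun j => by
    rw [integral_eq_sum_child R (integrableOn_sq_MDk _ R)]
    simp only [child_k, Nat.cast_succ, add_assoc, add_comm (1 : ℤ)]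
  rw [squareSum, Finset.sum_range_succ', Nat.cast_zero, add_zero, top, add_comm]
  simp only [squareSum, deeper]
  rw [Finset.sum_comm]

lemma squareSum_add_sq_le (hh : LocallyIntegrable h volume) {lam b c : ℝ} (hlam : 0 < lam)
    (hc : 0 ≤ c) (hb : ∀ (R : DyadicCube n) ε, |(R.child ε).avg h - R.avg h| ≤ b) (j : ℕ)
    (hj : ∀ i < j, ∀ S : DyadicCube n, squareSum h i S ≤ c * S.vol) (R : DyadicCube n) {z : ℝ}
    (hz : |R.avg h - z| ≤ lam) :
    squareSum h j R + (R.avg h - z) ^ 2 * R.vol ≤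
      (lam + b) ^ 2 * R.vol + c / lam * ∫ x in R.set, |h x - z| := by
  have hb0 : 0 ≤ b := (abs_nonneg _).trans (hb ⟨0, 0⟩ fun _ => false)
  induction j generalizing R with
  | zero =>
    have hsq : (R.avg h - z) ^ 2 ≤ (lam + b) ^ 2 := by
      rw [← sq_abs]; gcongr; linarith
    have hint : 0 ≤ ∫ x in R.set, |h x - z| :=
      setIntegral_nonneg (measurableSet_set R) fun _ _ => abs_nonneg _
    simp only [squareSum, Finset.range_zero, Finset.sum_empty, zero_add]
    nlinarith [R.vol_pos, mul_nonneg (div_nonneg hc hlam.le) hint]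
  | succ j ih =>
    have hchild : ∀ ε, squareSum h j (R.child ε) + ((R.child ε).avg h - z) ^ 2 * (R.child ε).vol
        ≤ (lam + b) ^ 2 * (R.child ε).vol + c / lam * ∫ x in (R.child ε).set, |h x - z| := by
      intro ε
      by_cases hgood : |(R.child ε).avg h - z| ≤ lam
      · exact ih (fun i hi => hj i (hi.trans j.lt_succ_self)) _ hgood
      have hfar : |(R.child ε).avg h - z| ≤ lam + b := by
        have := abs_sub_le ((R.child ε).avg h) (R.avg h) z
        linarith [hb R ε]
      have hstop : squareSum h j (R.child ε) ≤ c / lam * ∫ x in (R.child ε).set, |h x - z| :=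
        calc squareSum h j (R.child ε) ≤ c * (R.child ε).vol := hj j j.lt_succ_self _
          _ ≤ c / lam * (|(R.child ε).avg h - z| * (R.child ε).vol) := by
            rw [div_mul_eq_mul_div, le_div_iff₀ hlam, mul_comm |_|, mul_assoc]
            gcongr
            · exact (R.child ε).vol_pos.le
            · exact (not_le.1 hgood).le
          _ ≤ c / lam * ∫ x in (R.child ε).set, |h x - z| := by
            gcongr
            exact abs_avg_sub_mul_vol_le _ (integrableOn_set hh _) z
      have hsq : ((R.child ε).avg h - z) ^ 2 ≤ (lam + b) ^ 2 := by
        rw [← sq_abs]; gcongr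
      nlinarith [(R.child ε).vol_pos]
    calc squareSum h (j + 1) R + (R.avg h - z) ^ 2 * R.vol
        = ∑ ε, (squareSum h j (R.child ε) + ((R.child ε).avg h - z) ^ 2 * (R.child ε).vol) := by
          rw [Finset.sum_add_distrib, sum_sq_sub_mul_eq _ _ _ (R.avg h), sum_vol_child,
            squareSum_succ]
          · ring
          · rw [sum_avg_child_mul_vol R (integrableOn_set hh R), sum_vol_child]
      _ ≤ ∑ ε, ((lam + b) ^ 2 * (R.child ε).vol + c / lam * ∫ x in (R.child ε).set, |h x - z|) :=
          Finset.sum_le_sum fun ε _ => hchild ε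
      _ = (lam + b) ^ 2 * R.vol + c / lam * ∫ x in R.set, |h x - z| := by
          rw [Finset.sum_add_distrib, ← Finset.mul_sum, ← Finset.mul_sum, sum_vol_child,
            ← integral_eq_sum_child R (integrableOn_abs_sub hh R z)]

lemma squareSum_le_of_pos (hh : LocallyIntegrable h volume) {N : ℝ} (hN : 0 < N)
    (hbmo : ∀ R : DyadicCube n, ∫ x in R.set, |h x - R.avg h| ≤ N * R.vol) (K : ℕ)
    (R : DyadicCube n) : squareSum h K R ≤ 2 * ((2 + 2 ^ n) * N) ^ 2 * R.vol := by
  induction K using Nat.strong_induction_on generalizing R with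
  | _ K ih =>
    have hstop := squareSum_add_sq_le hh (lam := 2 * N) (by positivity) (by positivity)
      (abs_avg_child_sub_le hh hbmo) K ih R (z := R.avg h) (by simpa using hN.le)
    rw [sub_self, zero_pow two_ne_zero, zero_mul, add_zero] at hstop
    calc squareSum h K R
        ≤ (2 * N + 2 ^ n * N) ^ 2 * R.vol +
            2 * ((2 + 2 ^ n) * N) ^ 2 / (2 * N) * ∫ x in R.set, |h x - R.avg h| := hstop
      _ ≤ (2 * N + 2 ^ n * N) ^ 2 * R.vol +
            2 * ((2 + 2 ^ n) * N) ^ 2 / (2 * N) * (N * R.vol) := by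
          gcongr
          exact hbmo R
      _ = 2 * ((2 + 2 ^ n) * N) ^ 2 * R.vol := by
          field_simp
          ring

lemma squareSum_le (hh : LocallyIntegrable h volume) {N : ℝ} (hN : 0 ≤ N)
    (hbmo : ∀ R : DyadicCube n, ∫ x in R.set, |h x - R.avg h| ≤ N * R.vol) (K : ℕ)
    (R : DyadicCube n) : squareSum h K R ≤ 2 * ((2 + 2 ^ n) * N) ^ 2 * R.vol := by
  -- `2N` is no stopping level when `N = 0`; let `N` decrease to `0` instead.
  have hcont : ContinuousWithinAt (fun t : ℝ => 2 * ((2 + 2 ^ n) * t) ^ 2 * R.vol) (Ioi N) N :=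
    (by fun_prop : Continuous fun t : ℝ => 2 * ((2 + 2 ^ n) * t) ^ 2 * R.vol).continuousWithinAt
  refine ge_of_tendsto hcont (eventually_nhdsWithin_of_forall fun t ht => ?_)
  refine squareSum_le_of_pos hh (hN.trans_lt ht) (fun S => (hbmo S).trans ?_) K R
  exact mul_le_mul_of_nonneg_right (mem_Ioi.1 ht).le S.vol_pos.le

lemma integral_tsum_sq_MDk_le (hh : LocallyIntegrable h volume) {N : ℝ} (hN : 0 ≤ N)
    (hbmo : ∀ R : DyadicCube n, ∫ x in R.set, |h x - R.avg h| ≤ N * R.vol) (Q : DyadicCube n) :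
    ∫ x in Q.set, ∑' k : ℤ, (if Q.k ≤ k then MDk n k h x ^ 2 else 0) ≤
      2 * ((2 + 2 ^ n) * N) ^ 2 * Q.vol := by
  set g : ℤ → (Fin n → ℝ) → ℝ := fun k x => if Q.k ≤ k then MDk n k h x ^ 2 else 0
  have hg : ∀ k x, 0 ≤ g k x := fun _ _ => ite_nonneg (sq_nonneg _) le_rfl
  have hshift : ∑' k, ∫⁻ x in Q.set, ‖g k x‖ₑ =
      ∑' j : ℕ, ENNReal.ofReal (∫ x in Q.set, MDk n (Q.k + j) h x ^ 2) := by
    rw [← (add_right_injective Q.k).comp Nat.cast_injective |>.tsum_eq]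
    · refine tsum_congr fun j => ?_
      simp only [Function.comp_apply, g, le_add_iff_nonneg_right, Nat.cast_nonneg, if_true]
      rw [ofReal_integral_eq_lintegral_ofReal (integrableOn_sq_MDk j Q)
        (.of_forall fun _ => sq_nonneg _)]
      simp_rw [Real.enorm_of_nonneg (sq_nonneg _)]
    · intro k hk
      have hQk : Q.k ≤ k := by
        by_contra hlt
        exact hk (by simp [g, hlt])
      exact ⟨(k - Q.k).toNat, by simp only [Function.comp_apply]; omega⟩
  rw [← ENNReal.ofReal_le_ofReal_iff (mul_nonneg (by positivity) Q.vol_pos.le),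
    ← Real.enorm_of_nonneg (integral_nonneg fun x => tsum_nonneg (hg · x))]
  calc ‖∫ x in Q.set, ∑' k, g k x‖ₑ ≤ ∫⁻ x in Q.set, ‖∑' k, g k x‖ₑ :=
        enorm_integral_le_lintegral_enorm _
    _ ≤ ∫⁻ x in Q.set, ∑' k, ‖g k x‖ₑ := lintegral_mono fun _ => enorm_tsum_le_tsum_enorm
    _ = ∑' k, ∫⁻ x in Q.set, ‖g k x‖ₑ := lintegral_tsum fun k => by
        by_cases hk : Q.k ≤ k
        · simp only [g, hk, if_true, MDk]
          exact (((measurable_Ek n _ h).sub (measurable_Ek n k h)).pow_const 2).enorm.aemeasurable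
        · simp only [g, hk, if_false, enorm_zero]
          exact aemeasurable_const
    _ ≤ _ := by
        rw [hshift]
        refine ENNReal.tsum_le_of_sum_range_le fun K => ?_
        rw [← ENNReal.ofReal_sum_of_nonneg fun j _ =>
          setIntegral_nonneg (measurableSet_set Q) fun _ _ => sq_nonneg _]
        exact ENNReal.ofReal_le_ofReal (squareSum_le hh hN hbmo K Q)

end DyadicCube

end

/-- the dyadic Carleson measure estimate for martingale differences of a
BMO function (Proposition 8.6). -/
theorem statement4 (n : ℕ) :
    ∃ C : ℝ, 0 < C ∧
      ∀ h : (Fin n → ℝ) → ℝ, LocallyIntegrable h volume →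
        ∀ N : ℝ, 0 ≤ N →
          (∀ (c : Fin n → ℝ) (r : ℝ), 0 < r →
            avgOn n (cubeSet n c r) (fun x => |h x - avgOn n (cubeSet n c r) h|) ≤ N) →
          ∀ Q : DyadicCube n,
            avgOn n Q.set
                (fun x => ∑' k : ℤ, if Q.k ≤ k then (MDk n k h x) ^ 2 else 0) ≤
              C * N ^ 2 := by
  refine ⟨2 * (2 + 2 ^ n) ^ 2, by positivity, fun h hh N hN hbmo Q => ?_⟩
  have hsq := Q.integral_tsum_sq_MDk_le hh hN (DyadicCube.integral_abs_sub_avg_le hbmo)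
  rw [avgOn, ← measureReal_def, Q.measureReal_set, inv_mul_le_iff₀ Q.vol_pos]
  linarith
end

section
/- Let b be dyadically pseudo-accretive (b ∈ L^∞, |E_k b| ≥ δ for all k). Define A_k^b f = b E_k f / E_k b and D_k^b = A_{k+1}^b − A_k^b. Then Σ_k ‖D_k^b f‖₂² ≤ C ‖f‖₂² for all f ∈ L²(ℝⁿ), with C = C(δ, ‖b‖_∞, n). -/
/-!
Where `E_k b` and `E_{k+1} b` do not vanish,
`D_k^b f = b (Δ_k f · E_k b - E_k f · Δ_k b) / (E_{k+1} b · E_k b)`, so pseudo-accretivity gives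
`|D_k^b f|² ≲ |Δ_k f|² + |E_k f|² |Δ_k b|²` pointwise. The first term sums to at most `‖f‖₂²` by
orthogonality of the martingale differences `Δ_k`. By the same orthogonality on a dyadic cube `Q`,
`∑_{k ≥ gen Q} ∫_Q |Δ_k b|² ≤ ‖b‖_∞² |Q|`, i.e. `∑_k |Δ_k b|²` is a Carleson measure, and the
Carleson embedding `∑_k ∫ |E_k f|² |Δ_k b|² ≤ 4 ‖b‖_∞² ‖f‖₂²` is proved with a Bellman function:
with `α_j` the normalized truncated Carleson averages of `b`, the potential
`∫ (E_j f)² / (1 + α_j)` grows from one generation to the next by at least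
`(4 ‖b‖_∞²)⁻¹ ∫ (E_j f)² |Δ_j b|²`, by a weighted Cauchy–Schwarz inequality on each cube.
-/

open MeasureTheory Set
open scoped Classical

theorem sq_integral_le_integral_mul_integral_sq_div {α : Type*} [MeasurableSpace α]
    {μ : Measure α} {u w : α → ℝ} (hu : Integrable u μ) (hw : Integrable w μ)
    (huw : Integrable (fun x => u x ^ 2 / w x) μ) (hw0 : ∀ᵐ x ∂μ, 0 < w x) :
    (∫ x, u x ∂μ) ^ 2 ≤ (∫ x, w x ∂μ) * ∫ x, u x ^ 2 / w x ∂μ := by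
  have hquad (θ : ℝ) : 0 ≤ (∫ x, w x ∂μ) * (θ * θ) + (-2 * ∫ x, u x ∂μ) * θ
      + ∫ x, u x ^ 2 / w x ∂μ := by
    have hexpand : ∀ᵐ x ∂μ, (u x - θ * w x) ^ 2 / w x
        = w x * (θ * θ) + -2 * u x * θ + u x ^ 2 / w x := by
      filter_upwards [hw0] with x hx
      field_simp
      ring
    have h1 : Integrable (fun x => w x * (θ * θ)) μ := hw.mul_const _
    have h2 : Integrable (fun x => -2 * u x * θ) μ := (hu.const_mul _).mul_const _
    calc 0 ≤ ∫ x, (u x - θ * w x) ^ 2 / w x ∂μ :=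
          integral_nonneg_of_ae (hw0.mono fun x hx => div_nonneg (sq_nonneg _) hx.le)
      _ = _ := by
          rw [integral_congr_ae hexpand,
            integral_add (f := fun x => w x * (θ * θ) + -2 * u x * θ) (h1.add h2) huw,
            integral_add h1 h2, integral_mul_const, integral_mul_const, integral_const_mul]
  have := discrim_le_zero hquad
  rw [discrim] at this
  linarith

namespace AdaptedSquareFunction

open Finset (range)

variable {n : ℕ}

/-- The generation-`k` dyadic cube `DyadicCube.set ⟨k, m⟩`, described through floors. -/
def cell (n : ℕ) (k : ℤ) (m : Fin n → ℤ) : Set (Fin n → ℝ) :=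
  {x | ∀ i, ⌊(2:ℝ) ^ k * x i⌋ = m i}

noncomputable def cellIndex (n : ℕ) (k : ℤ) (x : Fin n → ℝ) : Fin n → ℤ :=
  fun i => ⌊(2:ℝ) ^ k * x i⌋

theorem mem_cell_iff {k : ℤ} {m : Fin n → ℤ} {x : Fin n → ℝ} :
    x ∈ cell n k m ↔ cellIndex n k x = m := by
  simp only [cell, mem_ofPred_eq, funext_iff, cellIndex]

theorem cellIndex_eq_of_mem {k : ℤ} {m : Fin n → ℤ} {x y : Fin n → ℝ} (hx : x ∈ cell n k m)
    (hy : y ∈ cell n k m) : cellIndex n k x = cellIndex n k y :=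
  (mem_cell_iff.1 hx).trans (mem_cell_iff.1 hy).symm

theorem mem_cell_cellIndex (k : ℤ) (x : Fin n → ℝ) : x ∈ cell n k (cellIndex n k x) :=
  mem_cell_iff.2 rfl

theorem dyadicPiece_eq_cell (k : ℤ) (x : Fin n → ℝ) :
    dyadicPiece n k x = cell n k (cellIndex n k x) := rfl

theorem cell_nonempty (k : ℤ) (m : Fin n → ℤ) : (cell n k m).Nonempty :=
  ⟨fun i => m i / 2 ^ k, fun i => by field_simp; exact Int.floor_intCast _⟩

theorem cell_eq_pi (k : ℤ) (m : Fin n → ℤ) :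
    cell n k m = univ.pi fun i => Ico ((m i : ℝ) / 2 ^ k) ((m i + 1) / 2 ^ k) := by
  have h2k : (0:ℝ) < 2 ^ k := by positivity
  ext x
  simp only [cell, mem_ofPred_eq, mem_pi, mem_univ, forall_const, mem_Ico]
  refine forall_congr' fun i => ?_
  rw [Int.floor_eq_iff, div_le_iff₀ h2k, lt_div_iff₀ h2k, mul_comm (x i)]

theorem measurableSet_cell (k : ℤ) (m : Fin n → ℤ) : MeasurableSet (cell n k m) := by
  rw [cell_eq_pi]
  exact .univ_pi fun _ => measurableSet_Ico

theorem volume_cell (k : ℤ) (m : Fin n → ℤ) :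
    volume (cell n k m) = ENNReal.ofReal ((2:ℝ) ^ (-(k * n))) := by
  simp only [cell_eq_pi, volume_pi_pi, Real.volume_Ico, ← sub_div, add_sub_cancel_left,
    Finset.prod_const, Finset.card_univ, Fintype.card_fin]
  rw [← ENNReal.ofReal_pow (by positivity), one_div, ← zpow_neg, ← zpow_natCast, ← zpow_mul,
    neg_mul]

theorem volume_cell_lt_top (k : ℤ) (m : Fin n → ℤ) : volume (cell n k m) < ⊤ := by
  simp [volume_cell]

theorem volume_cell_ne_zero (k : ℤ) (m : Fin n → ℤ) : volume (cell n k m) ≠ 0 := by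
  simp only [volume_cell, ne_eq, ENNReal.ofReal_eq_zero, not_le]
  positivity

instance (k : ℤ) (m : Fin n → ℤ) : IsFiniteMeasure (volume.restrict (cell n k m)) :=
  isFiniteMeasure_restrict.2 (volume_cell_lt_top k m).ne

theorem two_zpow_mul_measureReal_cell (k : ℤ) (m : Fin n → ℤ) :
    (2:ℝ) ^ (k * n) * volume.real (cell n k m) = 1 := by
  rw [measureReal_def, volume_cell, ENNReal.toReal_ofReal (by positivity),
    ← zpow_add₀ two_ne_zero, add_neg_cancel, zpow_zero]

theorem pairwise_disjoint_cell (k : ℤ) : Pairwise (Function.onFun Disjoint (cell n k)) :=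
  fun _ _ hmm' => Set.disjoint_left.2 fun _ hx hx' =>
    hmm' ((mem_cell_iff.1 hx).symm.trans (mem_cell_iff.1 hx'))

theorem pairwise_disjoint_cell_subtype (k : ℤ) (S : Set (Fin n → ℝ)) :
    Pairwise (Function.onFun Disjoint fun m : {m // cell n k m ⊆ S} => cell n k m) :=
  (pairwise_disjoint_cell k).comp_of_injective Subtype.val_injective

theorem iUnion_cell (k : ℤ) : ⋃ m, cell n k m = univ :=
  eq_univ_of_forall fun x => mem_iUnion.2 ⟨_, mem_cell_cellIndex k x⟩

theorem cellIndex_eq_cellIndex_succ_div_two (k : ℤ) (x : Fin n → ℝ) (i : Fin n) :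
    cellIndex n k x i = cellIndex n (k + 1) x i / 2 := by
  have h := Int.floor_div_natCast ((2:ℝ) ^ (k + 1) * x i) 2
  rw [zpow_add_one₀ two_ne_zero, mul_right_comm, Nat.cast_ofNat,
    mul_div_cancel_right₀ _ two_ne_zero] at h
  simpa only [cellIndex, zpow_add_one₀ (two_ne_zero (α := ℝ)), mul_right_comm _ (2:ℝ),
    Nat.cast_ofNat] using h

/-- `S` is measurable for the `k`-th dyadic σ-algebra. -/
def IsUnionOfCells (n : ℕ) (k : ℤ) (S : Set (Fin n → ℝ)) : Prop :=
  ∀ x ∈ S, cell n k (cellIndex n k x) ⊆ S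

theorem isUnionOfCells_univ (k : ℤ) : IsUnionOfCells n k univ :=
  fun _ _ => subset_univ _

theorem isUnionOfCells_cell (k : ℤ) (m : Fin n → ℤ) : IsUnionOfCells n k (cell n k m) :=
  fun _ hx _ hy => mem_cell_iff.2 ((mem_cell_iff.1 hy).trans (mem_cell_iff.1 hx))

theorem IsUnionOfCells.succ {k : ℤ} {S : Set (Fin n → ℝ)} (hS : IsUnionOfCells n k S) :
    IsUnionOfCells n (k + 1) S :=
  fun x hx y hy => hS x hx <| mem_cell_iff.2 <| funext fun i => by
    rw [cellIndex_eq_cellIndex_succ_div_two, mem_cell_iff.1 hy,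
      ← cellIndex_eq_cellIndex_succ_div_two]

theorem IsUnionOfCells.mono {j k : ℤ} {S : Set (Fin n → ℝ)} (hS : IsUnionOfCells n j S)
    (hjk : j ≤ k) : IsUnionOfCells n k S := by
  induction k, hjk using Int.leInduction with
  | base => exact hS
  | succ k _ ih => exact ih.succ

theorem IsUnionOfCells.iUnion_eq {k : ℤ} {S : Set (Fin n → ℝ)} (hS : IsUnionOfCells n k S) :
    ⋃ m : {m // cell n k m ⊆ S}, cell n k m = S :=
  Subset.antisymm (iUnion_subset fun m => m.2)
    fun x hx => mem_iUnion.2 ⟨⟨_, hS x hx⟩, mem_cell_cellIndex k x⟩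

theorem measurable_cellIndex (k : ℤ) : Measurable (cellIndex n k) :=
  measurable_pi_lambda _ fun i => Int.measurable_floor.comp ((measurable_pi_apply i).const_mul _)

theorem Ek_eq_of_mem {k : ℤ} {m : Fin n → ℤ} {x : Fin n → ℝ} (hx : x ∈ cell n k m)
    (f : (Fin n → ℝ) → ℝ) : Ek n k f x = 2 ^ (k * n) * ∫ y in cell n k m, f y := by
  rw [Ek, dyadicPiece_eq_cell, mem_cell_iff.1 hx]

theorem setIntegral_cell_of_eqOn {F : (Fin n → ℝ) → ℝ} {k : ℤ} {m : Fin n → ℤ} {c : ℝ}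
    (hF : ∀ x ∈ cell n k m, F x = c) : ∫ x in cell n k m, F x = volume.real (cell n k m) * c := by
  rw [setIntegral_congr_fun (measurableSet_cell k m) hF, setIntegral_const, smul_eq_mul]

theorem Ek_congr {k : ℤ} {x y : Fin n → ℝ} (h : cellIndex n k x = cellIndex n k y)
    (f : (Fin n → ℝ) → ℝ) : Ek n k f x = Ek n k f y := by
  rw [Ek, Ek, dyadicPiece_eq_cell, dyadicPiece_eq_cell, h]

theorem Ek_nonneg {k : ℤ} {f : (Fin n → ℝ) → ℝ} (hf : ∀ y, 0 ≤ f y) (x : Fin n → ℝ) :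
    0 ≤ Ek n k f x :=
  mul_nonneg (by positivity) (integral_nonneg hf)

theorem Ek_eq_setAverage (k : ℤ) (f : (Fin n → ℝ) → ℝ) (x : Fin n → ℝ) :
    Ek n k f x = ⨍ y in cell n k (cellIndex n k x), f y := by
  rw [setAverage_eq, smul_eq_mul,
    ← eq_inv_of_mul_eq_one_left (two_zpow_mul_measureReal_cell k (cellIndex n k x))]
  rfl

theorem measurable_Ek (k : ℤ) (f : (Fin n → ℝ) → ℝ) : Measurable (Ek n k f) :=
  (measurable_of_countable fun m => (2:ℝ) ^ (k * n) * ∫ y in cell n k m, f y).comp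
    (measurable_cellIndex k)

theorem hasSum_setIntegral_cell {F : (Fin n → ℝ) → ℝ} (hF : Integrable F) (k : ℤ) :
    HasSum (fun m => ∫ x in cell n k m, F x) (∫ x, F x) := by
  simpa only [iUnion_cell, Measure.restrict_univ] using hasSum_integral_iUnion
    (measurableSet_cell k) (pairwise_disjoint_cell k) (by rwa [iUnion_cell, integrableOn_univ])

theorem setIntegral_cell_Ek (k : ℤ) (m : Fin n → ℤ) (f : (Fin n → ℝ) → ℝ) :
    ∫ x in cell n k m, Ek n k f x = ∫ x in cell n k m, f x := by
  rw [setIntegral_congr_fun (measurableSet_cell k m) fun x hx => Ek_eq_of_mem hx f,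
    setIntegral_const, smul_eq_mul, ← mul_assoc, mul_comm _ (2 ^ _),
    two_zpow_mul_measureReal_cell, one_mul]

theorem setLIntegral_cell_enorm_Ek_le (k : ℤ) (m : Fin n → ℤ) (f : (Fin n → ℝ) → ℝ) :
    ∫⁻ x in cell n k m, ‖Ek n k f x‖ₑ ≤ ∫⁻ x in cell n k m, ‖f x‖ₑ := by
  rw [setLIntegral_congr_fun (measurableSet_cell k m) fun x hx => by rw [Ek_eq_of_mem hx f],
    setLIntegral_const, enorm_mul, Real.enorm_of_nonneg (by positivity), volume_cell,
    mul_right_comm, ← ENNReal.ofReal_mul (by positivity), ← zpow_add₀ two_ne_zero,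
    add_neg_cancel, zpow_zero, ENNReal.ofReal_one, one_mul]
  exact enorm_integral_le_lintegral_enorm f

namespace IsUnionOfCells

variable {k : ℤ} {S : Set (Fin n → ℝ)}

theorem measurableSet (hS : IsUnionOfCells n k S) : MeasurableSet S :=
  hS.iUnion_eq ▸ .iUnion fun _ => measurableSet_cell _ _

theorem setLIntegral_enorm_Ek_le (hS : IsUnionOfCells n k S) (f : (Fin n → ℝ) → ℝ) :
    ∫⁻ x in S, ‖Ek n k f x‖ₑ ≤ ∫⁻ x in S, ‖f x‖ₑ := by
  rw [← hS.iUnion_eq,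
    lintegral_iUnion (fun _ => measurableSet_cell _ _) (pairwise_disjoint_cell_subtype k S),
    lintegral_iUnion (fun _ => measurableSet_cell _ _) (pairwise_disjoint_cell_subtype k S)]
  exact ENNReal.tsum_le_tsum fun m => setLIntegral_cell_enorm_Ek_le k m f

theorem integrableOn_Ek (hS : IsUnionOfCells n k S) {f : (Fin n → ℝ) → ℝ}
    (hf : IntegrableOn f S) : IntegrableOn (Ek n k f) S :=
  ⟨(measurable_Ek k f).aestronglyMeasurable, (hS.setLIntegral_enorm_Ek_le f).trans_lt hf.2⟩

theorem hasSum_setIntegral_cell (hS : IsUnionOfCells n k S) {f : (Fin n → ℝ) → ℝ}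
    (hf : IntegrableOn f S) :
    HasSum (fun m : {m // cell n k m ⊆ S} => ∫ x in cell n k m, f x) (∫ x in S, f x) := by
  rw [← hS.iUnion_eq] at hf
  simpa only [hS.iUnion_eq] using
    hasSum_integral_iUnion (fun _ => measurableSet_cell _ _) (pairwise_disjoint_cell_subtype k S) hf

theorem setIntegral_Ek (hS : IsUnionOfCells n k S) {f : (Fin n → ℝ) → ℝ}
    (hf : IntegrableOn f S) : ∫ x in S, Ek n k f x = ∫ x in S, f x := by
  have h := hS.hasSum_setIntegral_cell (hS.integrableOn_Ek hf)
  simp only [setIntegral_cell_Ek] at h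
  exact h.unique (hS.hasSum_setIntegral_cell hf)

end IsUnionOfCells

theorem sq_Ek_le_Ek_sq {k : ℤ} {f : (Fin n → ℝ) → ℝ} {x : Fin n → ℝ}
    (hf : MemLp f 2 (volume.restrict (cell n k (cellIndex n k x)))) :
    Ek n k f x ^ 2 ≤ Ek n k (fun y => f y ^ 2) x := by
  simp only [Ek_eq_setAverage]
  exact (even_two.convexOn_pow (𝕜 := ℝ)).map_set_average_le (continuous_pow 2).continuousOn
    isClosed_univ (volume_cell_ne_zero _ _) (volume_cell_lt_top _ _).ne
    (ae_of_all _ fun _ => mem_univ _) (hf.integrable one_le_two) hf.integrable_sq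

theorem setIntegral_cell_Ek_succ {k : ℤ} {m : Fin n → ℤ} {f : (Fin n → ℝ) → ℝ}
    {x₀ : Fin n → ℝ} (hx₀ : x₀ ∈ cell n k m) (hf : IntegrableOn f (cell n k m)) :
    ∫ x in cell n k m, Ek n (k + 1) f x = volume.real (cell n k m) * Ek n k f x₀ := by
  have hS := isUnionOfCells_cell k m
  rw [hS.succ.setIntegral_Ek hf, ← hS.setIntegral_Ek hf, setIntegral_cell_of_eqOn fun x hx =>
    Ek_congr (cellIndex_eq_of_mem hx hx₀) f]

theorem setIntegral_cell_MDk {k : ℤ} {m : Fin n → ℤ} {f : (Fin n → ℝ) → ℝ}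
    (hf : IntegrableOn f (cell n k m)) : ∫ x in cell n k m, MDk n k f x = 0 := by
  have hS := isUnionOfCells_cell k m
  simp only [MDk]
  rw [integral_sub (hS.succ.integrableOn_Ek hf) (hS.integrableOn_Ek hf),
    hS.succ.setIntegral_Ek hf, hS.setIntegral_Ek hf, sub_self]

theorem setIntegral_cell_Ek_mul_MDk {k : ℤ} {m : Fin n → ℤ} {f : (Fin n → ℝ) → ℝ}
    (hf : IntegrableOn f (cell n k m)) :
    ∫ x in cell n k m, Ek n k f x * MDk n k f x = 0 := by
  rw [setIntegral_congr_fun (measurableSet_cell k m) fun x hx => by rw [Ek_eq_of_mem hx f],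
    integral_const_mul, setIntegral_cell_MDk hf, mul_zero]

namespace IsUnionOfCells

variable {k : ℤ} {S : Set (Fin n → ℝ)} {f : (Fin n → ℝ) → ℝ}

theorem memLp_cell (hS : IsUnionOfCells n k S) (hf : MemLp f 2 (volume.restrict S))
    {x : Fin n → ℝ} (hx : x ∈ S) : MemLp f 2 (volume.restrict (cell n k (cellIndex n k x))) :=
  hf.mono_measure (Measure.restrict_mono (hS x hx) le_rfl)

theorem memLp_Ek (hS : IsUnionOfCells n k S) (hf : MemLp f 2 (volume.restrict S)) :
    MemLp (Ek n k f) 2 (volume.restrict S) := by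
  have hm := (measurable_Ek k f).aestronglyMeasurable (μ := volume.restrict S)
  rw [memLp_two_iff_integrable_sq hm]
  refine (hS.integrableOn_Ek hf.integrable_sq).mono' (hm.pow 2) ?_
  refine ae_restrict_of_forall_mem hS.measurableSet fun x hx => ?_
  rw [Real.norm_of_nonneg (sq_nonneg _)]
  exact sq_Ek_le_Ek_sq (hS.memLp_cell hf hx)

theorem memLp_MDk (hS : IsUnionOfCells n k S) (hf : MemLp f 2 (volume.restrict S)) :
    MemLp (MDk n k f) 2 (volume.restrict S) :=
  (hS.succ.memLp_Ek hf).sub (hS.memLp_Ek hf)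

theorem setIntegral_sq_Ek_le (hS : IsUnionOfCells n k S) (hf : MemLp f 2 (volume.restrict S)) :
    ∫ x in S, Ek n k f x ^ 2 ≤ ∫ x in S, f x ^ 2 :=
  calc ∫ x in S, Ek n k f x ^ 2 ≤ ∫ x in S, Ek n k (fun y => f y ^ 2) x :=
        setIntegral_mono_on (hS.memLp_Ek hf).integrable_sq (hS.integrableOn_Ek hf.integrable_sq)
          hS.measurableSet fun _ hx => sq_Ek_le_Ek_sq (hS.memLp_cell hf hx)
    _ = ∫ x in S, f x ^ 2 := hS.setIntegral_Ek hf.integrable_sq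

theorem setIntegral_Ek_mul_MDk (hS : IsUnionOfCells n k S) (hf : MemLp f 2 (volume.restrict S)) :
    ∫ x in S, Ek n k f x * MDk n k f x = 0 := by
  have h := hS.hasSum_setIntegral_cell ((hS.memLp_Ek hf).integrable_mul (hS.memLp_MDk hf))
  refine h.unique ?_
  convert hasSum_zero with m
  exact setIntegral_cell_Ek_mul_MDk
    ((hf.mono_measure (Measure.restrict_mono m.2 le_rfl)).integrable one_le_two)

theorem setIntegral_sq_Ek_succ (hS : IsUnionOfCells n k S) (hf : MemLp f 2 (volume.restrict S)) :
    ∫ x in S, Ek n (k + 1) f x ^ 2 = (∫ x in S, Ek n k f x ^ 2) + ∫ x in S, MDk n k f x ^ 2 := by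
  have hE := (hS.memLp_Ek hf).integrable_sq
  have hD := (hS.memLp_MDk hf).integrable_sq
  have hED : Integrable (fun x => 2 * (Ek n k f x * MDk n k f x)) (volume.restrict S) :=
    ((hS.memLp_Ek hf).integrable_mul (hS.memLp_MDk hf)).const_mul 2
  have hexpand (x : Fin n → ℝ) : Ek n (k + 1) f x ^ 2
      = Ek n k f x ^ 2 + MDk n k f x ^ 2 + 2 * (Ek n k f x * MDk n k f x) := by
    rw [MDk]; ring
  simp only [hexpand]
  rw [integral_add (f := fun x => Ek n k f x ^ 2 + MDk n k f x ^ 2) (hE.add hD) hED,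
    integral_add hE hD, integral_const_mul, hS.setIntegral_Ek_mul_MDk hf, mul_zero, add_zero]

theorem sum_setIntegral_sq_MDk_le (hS : IsUnionOfCells n k S) (hf : MemLp f 2 (volume.restrict S))
    (N : ℕ) : ∑ t ∈ range N, ∫ x in S, MDk n (k + t) f x ^ 2 ≤ ∫ x in S, f x ^ 2 := by
  set F : ℕ → ℝ := fun t => ∫ x in S, Ek n (k + t) f x ^ 2
  have hstep (t : ℕ) : ∫ x in S, MDk n (k + t) f x ^ 2 = F (t + 1) - F t := by
    have h := (hS.mono (by omega : k ≤ k + t)).setIntegral_sq_Ek_succ hf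
    simp only [F, Nat.cast_succ, ← add_assoc, h]
    ring
  simp only [hstep, Finset.sum_range_sub F]
  have h0 : 0 ≤ F 0 := integral_nonneg fun _ => sq_nonneg _
  have hN : F N ≤ _ := (hS.mono (by omega : k ≤ k + N)).setIntegral_sq_Ek_le hf
  linarith

end IsUnionOfCells

section Global

variable {g : (Fin n → ℝ) → ℝ}

theorem memLp_Ek (hg : MemLp g 2 volume) (k : ℤ) : MemLp (Ek n k g) 2 volume := by
  simpa only [Measure.restrict_univ] using (isUnionOfCells_univ k).memLp_Ek (hg.restrict univ)

theorem integral_sq_Ek_le (hg : MemLp g 2 volume) (k : ℤ) :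
    ∫ x, Ek n k g x ^ 2 ≤ ∫ x, g x ^ 2 := by
  simpa only [Measure.restrict_univ] using
    (isUnionOfCells_univ k).setIntegral_sq_Ek_le (hg.restrict univ)

theorem sum_integral_sq_MDk_le (hg : MemLp g 2 volume) (a : ℤ) (N : ℕ) :
    ∑ t ∈ range N, ∫ x, MDk n (a + t) g x ^ 2 ≤ ∫ x, g x ^ 2 := by
  simpa only [Measure.restrict_univ] using
    (isUnionOfCells_univ a).sum_setIntegral_sq_MDk_le (hg.restrict univ) N

end Global

section Bounded

variable {b : (Fin n → ℝ) → ℝ} {M : ℝ}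

theorem abs_Ek_le (hbM : ∀ᵐ x ∂volume, |b x| ≤ M) (k : ℤ) (x : Fin n → ℝ) :
    |Ek n k b x| ≤ M := by
  have h := norm_setIntegral_le_of_norm_le_const_ae (f := b)
    (volume_cell_lt_top k (cellIndex n k x)) (ae_restrict_of_ae hbM)
  rw [Ek_eq_of_mem (mem_cell_cellIndex k x), abs_mul, abs_of_pos (by positivity)]
  calc 2 ^ (k * n) * |∫ y in cell n k (cellIndex n k x), b y|
      ≤ 2 ^ (k * n) * (M * volume.real (cell n k (cellIndex n k x))) := by gcongr; exact h
    _ = M := by rw [mul_left_comm, two_zpow_mul_measureReal_cell, mul_one]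

theorem abs_MDk_le (hbM : ∀ᵐ x ∂volume, |b x| ≤ M) (k : ℤ) (x : Fin n → ℝ) :
    |MDk n k b x| ≤ 2 * M := by
  have h1 := abs_Ek_le hbM (k + 1) x
  have h0 := abs_Ek_le hbM k x
  rw [MDk]
  linarith [abs_sub (Ek n (k + 1) b x) (Ek n k b x)]

theorem sq_MDk_le (hbM : ∀ᵐ x ∂volume, |b x| ≤ M) (k : ℤ) (x : Fin n → ℝ) :
    MDk n k b x ^ 2 ≤ 4 * M ^ 2 := by
  rw [show 4 * M ^ 2 = (2 * M) ^ 2 by ring]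
  exact sq_le_sq.2 ((abs_MDk_le hbM k x).trans (le_abs_self _))

theorem memLp_restrict_cell (hb : Measurable b) (hbM : ∀ᵐ x ∂volume, |b x| ≤ M) (k : ℤ)
    (m : Fin n → ℤ) : MemLp b 2 (volume.restrict (cell n k m)) :=
  .of_bound hb.aestronglyMeasurable M (ae_restrict_of_ae hbM)

theorem sum_setIntegral_cell_sq_MDk_le (hb : Measurable b) (hbM : ∀ᵐ x ∂volume, |b x| ≤ M)
    (j : ℤ) (m : Fin n → ℤ) (N : ℕ) :
    ∑ s ∈ range N, ∫ x in cell n j m, MDk n (j + s) b x ^ 2 ≤ M ^ 2 * volume.real (cell n j m) :=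
  calc ∑ s ∈ range N, ∫ x in cell n j m, MDk n (j + s) b x ^ 2 ≤ ∫ x in cell n j m, b x ^ 2 :=
        (isUnionOfCells_cell j m).sum_setIntegral_sq_MDk_le (memLp_restrict_cell hb hbM j m) N
    _ ≤ ∫ _ in cell n j m, M ^ 2 :=
        setIntegral_mono_ae (memLp_restrict_cell hb hbM j m).integrable_sq (integrable_const _)
          (hbM.mono fun x hx => sq_le_sq.2 (hx.trans (le_abs_self M)))
    _ = M ^ 2 * volume.real (cell n j m) := by rw [setIntegral_const, smul_eq_mul, mul_comm]

end Bounded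

/-- The normalized truncated Carleson box average
`α_j^{(r)} = M⁻² ∑_{s<r} E_j((Δ_{j+s} b)²)`. -/
noncomputable def carlesonAvg (n : ℕ) (b : (Fin n → ℝ) → ℝ) (M : ℝ) (j : ℤ) (r : ℕ)
    (x : Fin n → ℝ) : ℝ :=
  (M ^ 2)⁻¹ * ∑ s ∈ range r, Ek n j (fun y => MDk n (j + s) b y ^ 2) x

section Carleson

variable {b : (Fin n → ℝ) → ℝ} {M : ℝ}

theorem measurable_carlesonAvg (j : ℤ) (r : ℕ) : Measurable (carlesonAvg n b M j r) :=
  (Finset.measurable_sum _ fun _ _ => measurable_Ek j _).const_mul _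

theorem carlesonAvg_nonneg (j : ℤ) (r : ℕ) (x : Fin n → ℝ) : 0 ≤ carlesonAvg n b M j r x :=
  mul_nonneg (by positivity) (Finset.sum_nonneg fun _ _ => Ek_nonneg (fun _ => sq_nonneg _) x)

theorem carlesonAvg_congr {j : ℤ} {x y : Fin n → ℝ} (h : cellIndex n j x = cellIndex n j y)
    (r : ℕ) : carlesonAvg n b M j r x = carlesonAvg n b M j r y := by
  simp only [carlesonAvg, Ek_congr h]

theorem carlesonAvg_le_one (hM : 0 < M) (hb : Measurable b) (hbM : ∀ᵐ x ∂volume, |b x| ≤ M)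
    (j : ℤ) (r : ℕ) (x : Fin n → ℝ) : carlesonAvg n b M j r x ≤ 1 := by
  have h := sum_setIntegral_cell_sq_MDk_le hb hbM j (cellIndex n j x) r
  rw [carlesonAvg, inv_mul_le_one₀ (by positivity)]
  simp only [Ek_eq_of_mem (mem_cell_cellIndex j x), ← Finset.mul_sum]
  calc 2 ^ (j * n) * ∑ s ∈ range r, ∫ y in cell n j (cellIndex n j x), MDk n (j + s) b y ^ 2
      ≤ 2 ^ (j * n) * (M ^ 2 * volume.real (cell n j (cellIndex n j x))) := by gcongr
    _ = M ^ 2 := by rw [mul_left_comm, two_zpow_mul_measureReal_cell, mul_one]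

theorem integrableOn_cell_sq_MDk (hb : Measurable b) (hbM : ∀ᵐ x ∂volume, |b x| ≤ M) {i k : ℤ}
    (hik : i ≤ k) (m : Fin n → ℤ) : IntegrableOn (fun x => MDk n k b x ^ 2) (cell n i m) :=
  (((isUnionOfCells_cell i m).mono hik).memLp_MDk (memLp_restrict_cell hb hbM i m)).integrable_sq

theorem integrableOn_cell_carlesonAvg (hb : Measurable b) (hbM : ∀ᵐ x ∂volume, |b x| ≤ M)
    {i j : ℤ} (hij : i ≤ j) (m : Fin n → ℤ) (r : ℕ) :
    IntegrableOn (carlesonAvg n b M j r) (cell n i m) :=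
  (integrable_finsetSum _ fun s _ => ((isUnionOfCells_cell i m).mono hij).integrableOn_Ek
    (integrableOn_cell_sq_MDk hb hbM (by omega) m)).const_mul _

theorem setIntegral_cell_carlesonAvg (hb : Measurable b) (hbM : ∀ᵐ x ∂volume, |b x| ≤ M)
    {i j : ℤ} (hij : i ≤ j) (m : Fin n → ℤ) (r : ℕ) :
    ∫ x in cell n i m, carlesonAvg n b M j r x
      = (M ^ 2)⁻¹ * ∑ s ∈ range r, ∫ x in cell n i m, MDk n (j + s) b x ^ 2 := by
  have hS := (isUnionOfCells_cell i m).mono hij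
  have hint (s : ℕ) := integrableOn_cell_sq_MDk hb hbM (by omega : i ≤ j + s) m
  simp only [carlesonAvg]
  rw [integral_const_mul, integral_finsetSum _ fun s _ => hS.integrableOn_Ek (hint s)]
  simp only [hS.setIntegral_Ek (hint _)]

theorem setIntegral_cell_carlesonAvg_succ (hb : Measurable b) (hbM : ∀ᵐ x ∂volume, |b x| ≤ M)
    {j : ℤ} {m : Fin n → ℤ} {x₀ : Fin n → ℝ} (hx₀ : x₀ ∈ cell n j m) (r : ℕ) :
    ∫ x in cell n j m, carlesonAvg n b M (j + 1) r x
      = volume.real (cell n j m) * carlesonAvg n b M j (r + 1) x₀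
        - (M ^ 2)⁻¹ * ∫ x in cell n j m, MDk n j b x ^ 2 := by
  rw [← setIntegral_cell_of_eqOn fun x hx =>
      carlesonAvg_congr (cellIndex_eq_of_mem hx hx₀) _,
    setIntegral_cell_carlesonAvg hb hbM le_rfl, setIntegral_cell_carlesonAvg hb hbM (by omega),
    Finset.sum_range_succ', mul_add]
  simp only [Nat.cast_succ, Nat.cast_zero, add_zero, add_assoc, add_comm (1 : ℤ)]
  ring

end Carleson

theorem bellman_ineq {V P e c X : ℝ} (hV : 0 < V) (hP : P ≤ 2) (he : 0 ≤ e)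
    (hVW : V ≤ V * P - e) (hX : (V * c) ^ 2 ≤ (V * P - e) * X) :
    V * c ^ 2 / P + c ^ 2 * e / 4 ≤ X := by
  have hW : 0 < V * P - e := hV.trans_le hVW
  have hP1 : 1 ≤ P := by nlinarith
  have hWP : (V * P - e) * P ≤ 4 * V := by nlinarith
  calc V * c ^ 2 / P + c ^ 2 * e / 4 ≤ (V * c) ^ 2 / (V * P - e) := by
        rw [div_add_div _ _ (by positivity) four_ne_zero, div_le_div_iff₀ (by positivity) hW]
        have hce : 0 ≤ c ^ 2 * e := by positivity
        nlinarith [mul_le_mul_of_nonneg_left hWP hce]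
    _ ≤ X := div_le_of_le_mul₀ hW.le (by nlinarith) (by linarith)

section Bellman

variable {b g : (Fin n → ℝ) → ℝ} {M : ℝ}

theorem integrable_sq_Ek_div_one_add_carlesonAvg {μ : Measure (Fin n → ℝ)} {j k : ℤ} {r : ℕ}
    (hg : Integrable (fun x => Ek n k g x ^ 2) μ) :
    Integrable (fun x => Ek n k g x ^ 2 / (1 + carlesonAvg n b M j r x)) μ := by
  refine hg.mono' ((((measurable_Ek k g).pow_const 2).div
    (measurable_const.add (measurable_carlesonAvg j r))).aestronglyMeasurable) (ae_of_all _ ?_)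
  intro x
  have h1 : 1 ≤ 1 + carlesonAvg n b M j r x := le_add_of_nonneg_right (carlesonAvg_nonneg j r x)
  rw [Real.norm_of_nonneg (by positivity)]
  exact div_le_self (sq_nonneg _) h1

theorem bellman_cell_step (hM : 0 < M) (hb : Measurable b) (hbM : ∀ᵐ x ∂volume, |b x| ≤ M)
    {j : ℤ} {m : Fin n → ℤ} (hg : MemLp g 2 (volume.restrict (cell n j m))) (r : ℕ) :
    (∫ x in cell n j m, Ek n j g x ^ 2 / (1 + carlesonAvg n b M j (r + 1) x))
      + (4 * M ^ 2)⁻¹ * ∫ x in cell n j m, Ek n j g x ^ 2 * MDk n j b x ^ 2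
      ≤ ∫ x in cell n j m, Ek n (j + 1) g x ^ 2 / (1 + carlesonAvg n b M (j + 1) r x) := by
  obtain ⟨x₀, hx₀⟩ := cell_nonempty j m
  have hα := setIntegral_cell_carlesonAvg_succ hb hbM hx₀ r
  set V := volume.real (cell n j m)
  set P := 1 + carlesonAvg n b M j (r + 1) x₀
  set e := (M ^ 2)⁻¹ * ∫ x in cell n j m, MDk n j b x ^ 2
  have hV : 0 < V := ENNReal.toReal_pos (volume_cell_ne_zero j m) (volume_cell_lt_top j m).ne
  have hα₀ : 0 ≤ ∫ x in cell n j m, carlesonAvg n b M (j + 1) r x :=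
    integral_nonneg fun x => carlesonAvg_nonneg (j + 1) r x
  have hαint := integrableOn_cell_carlesonAvg hb hbM (by omega : j ≤ j + 1) m r
  have hw : ∫ x in cell n j m, (1 + carlesonAvg n b M (j + 1) r x)
      = V + ∫ x in cell n j m, carlesonAvg n b M (j + 1) r x := by
    rw [integral_add (integrable_const 1) hαint, setIntegral_const, smul_eq_mul, mul_one]
  have hCS := sq_integral_le_integral_mul_integral_sq_div
    (w := fun x => 1 + carlesonAvg n b M (j + 1) r x)
    ((isUnionOfCells_cell j m).succ.integrableOn_Ek (hg.integrable one_le_two))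
    ((integrable_const 1).add hαint)
    (integrable_sq_Ek_div_one_add_carlesonAvg
      ((isUnionOfCells_cell j m).succ.memLp_Ek hg).integrable_sq)
    (ae_of_all _ fun x => add_pos_of_pos_of_nonneg one_pos (carlesonAvg_nonneg _ _ x))
  rw [setIntegral_cell_Ek_succ hx₀ (hg.integrable one_le_two), hw, hα,
    show V + (V * carlesonAvg n b M j (r + 1) x₀ - e) = V * P - e by ring] at hCS
  rw [setIntegral_cell_of_eqOn fun x hx => by
      rw [Ek_congr (cellIndex_eq_of_mem hx hx₀), carlesonAvg_congr (cellIndex_eq_of_mem hx hx₀)],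
    setIntegral_congr_fun (measurableSet_cell j m) fun x hx => by
      rw [Ek_congr (cellIndex_eq_of_mem hx hx₀)],
    integral_const_mul, ← mul_div_assoc]
  have hineq := bellman_ineq (P := P) (e := e) hV
    (by linarith [carlesonAvg_le_one hM hb hbM j (r + 1) x₀])
    (mul_nonneg (by positivity) (integral_nonneg fun _ => sq_nonneg _)) (by linarith) hCS
  convert hineq using 2
  simp only [e]
  ring

theorem integrable_sq_Ek_mul_sq_MDk (hbM : ∀ᵐ x ∂volume, |b x| ≤ M) (hg : MemLp g 2 volume)
    (k : ℤ) : Integrable (fun x => Ek n k g x ^ 2 * MDk n k b x ^ 2) := by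
  refine ((memLp_Ek hg k).integrable_sq.mul_const (4 * M ^ 2)).mono'
    (((measurable_Ek k g).pow_const 2).mul
      (((measurable_Ek (k + 1) b).sub (measurable_Ek k b)).pow_const 2)).aestronglyMeasurable
    (ae_of_all _ fun x => ?_)
  rw [Real.norm_of_nonneg (by positivity)]
  exact mul_le_mul_of_nonneg_left (sq_MDk_le hbM k x) (sq_nonneg _)

theorem bellman_step (hM : 0 < M) (hb : Measurable b) (hbM : ∀ᵐ x ∂volume, |b x| ≤ M)
    (hg : MemLp g 2 volume) (j : ℤ) (r : ℕ) :
    (∫ x, Ek n j g x ^ 2 / (1 + carlesonAvg n b M j (r + 1) x))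
      + (4 * M ^ 2)⁻¹ * ∫ x, Ek n j g x ^ 2 * MDk n j b x ^ 2
      ≤ ∫ x, Ek n (j + 1) g x ^ 2 / (1 + carlesonAvg n b M (j + 1) r x) :=
  hasSum_le (fun _ => bellman_cell_step hM hb hbM (hg.restrict _) r)
    ((hasSum_setIntegral_cell
      (integrable_sq_Ek_div_one_add_carlesonAvg (memLp_Ek hg j).integrable_sq) j).add
      ((hasSum_setIntegral_cell (integrable_sq_Ek_mul_sq_MDk hbM hg j) j).mul_left _))
    (hasSum_setIntegral_cell
      (integrable_sq_Ek_div_one_add_carlesonAvg (memLp_Ek hg (j + 1)).integrable_sq) j)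

theorem sum_integral_sq_Ek_mul_sq_MDk_le (hM : 0 < M) (hb : Measurable b)
    (hbM : ∀ᵐ x ∂volume, |b x| ≤ M) (hg : MemLp g 2 volume) (a : ℤ) (N : ℕ) :
    ∑ t ∈ range N, ∫ x, Ek n (a + t) g x ^ 2 * MDk n (a + t) b x ^ 2
      ≤ 4 * M ^ 2 * ∫ x, g x ^ 2 := by
  set B : ℕ → ℝ := fun t => ∫ x, Ek n (a + t) g x ^ 2 / (1 + carlesonAvg n b M (a + t) (N - t) x)
  have hstep : ∀ t ∈ range N, (4 * M ^ 2)⁻¹ * ∫ x, Ek n (a + t) g x ^ 2 * MDk n (a + t) b x ^ 2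
      ≤ B (t + 1) - B t := by
    intro t ht
    have h := bellman_step hM hb hbM hg (a + t) (N - (t + 1))
    rw [show N - (t + 1) + 1 = N - t by grind] at h
    simp only [B, Nat.cast_succ, ← add_assoc]
    linarith
  have hsum := Finset.sum_le_sum hstep
  rw [← Finset.mul_sum, Finset.sum_range_sub B, inv_mul_le_iff₀ (by positivity)] at hsum
  have hB₀ : 0 ≤ B 0 := integral_nonneg fun x =>
    div_nonneg (sq_nonneg _) (add_nonneg zero_le_one (carlesonAvg_nonneg _ _ x))
  have hB : B N ≤ ∫ x, g x ^ 2 :=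
    (integral_mono (integrable_sq_Ek_div_one_add_carlesonAvg (memLp_Ek hg _).integrable_sq)
      (memLp_Ek hg _).integrable_sq fun x => div_le_self (sq_nonneg _)
        (le_add_of_nonneg_right (carlesonAvg_nonneg _ _ x))).trans (integral_sq_Ek_le hg _)
  nlinarith

end Bellman

theorem TDkb_eq {b f : (Fin n → ℝ) → ℝ} {k : ℤ} {x : Fin n → ℝ} (h₀ : Ek n k b x ≠ 0)
    (h₁ : Ek n (k + 1) b x ≠ 0) :
    TDkb n b k f x = b x * (MDk n k f x * Ek n k b x - Ek n k f x * MDk n k b x)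
      / (Ek n (k + 1) b x * Ek n k b x) := by
  simp only [TDkb, Akb, MDk]
  field_simp
  ring

theorem sq_TDkb_le {b f : (Fin n → ℝ) → ℝ} {δ M : ℝ} {k : ℤ} {x : Fin n → ℝ} (hδ : 0 < δ)
    (hb : |b x| ≤ M) (hEb : |Ek n k b x| ≤ M) (h₀ : δ ≤ |Ek n k b x|)
    (h₁ : δ ≤ |Ek n (k + 1) b x|) :
    TDkb n b k f x ^ 2 ≤ 2 * M ^ 4 / δ ^ 4 * MDk n k f x ^ 2
      + 2 * M ^ 2 / δ ^ 4 * (Ek n k f x ^ 2 * MDk n k b x ^ 2) := by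
  rw [TDkb_eq (abs_pos.1 (hδ.trans_le h₀)) (abs_pos.1 (hδ.trans_le h₁)), div_pow,
    mul_pow]
  have hden : δ ^ 4 ≤ (Ek n (k + 1) b x * Ek n k b x) ^ 2 := by
    rw [show δ ^ 4 = (δ * δ) ^ 2 by ring, ← sq_abs (Ek n (k + 1) b x * Ek n k b x), abs_mul]
    exact pow_le_pow_left₀ (by positivity) (mul_le_mul h₁ h₀ hδ.le (abs_nonneg _)) 2
  have hnum : b x ^ 2 * (MDk n k f x * Ek n k b x - Ek n k f x * MDk n k b x) ^ 2
      ≤ M ^ 2 * (2 * M ^ 2 * MDk n k f x ^ 2 + 2 * (Ek n k f x ^ 2 * MDk n k b x ^ 2)) := by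
    have hb2 : b x ^ 2 ≤ M ^ 2 := sq_le_sq.2 (hb.trans (le_abs_self M))
    have hE2 : Ek n k b x ^ 2 ≤ M ^ 2 := sq_le_sq.2 (hEb.trans (le_abs_self M))
    have hdiff : (MDk n k f x * Ek n k b x - Ek n k f x * MDk n k b x) ^ 2
        ≤ 2 * M ^ 2 * MDk n k f x ^ 2 + 2 * (Ek n k f x ^ 2 * MDk n k b x ^ 2) := by
      nlinarith [sq_nonneg (MDk n k f x * Ek n k b x + Ek n k f x * MDk n k b x),
        mul_le_mul_of_nonneg_left hE2 (sq_nonneg (MDk n k f x))]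
    exact mul_le_mul hb2 hdiff (sq_nonneg _) (sq_nonneg M)
  calc b x ^ 2 * (MDk n k f x * Ek n k b x - Ek n k f x * MDk n k b x) ^ 2
        / (Ek n (k + 1) b x * Ek n k b x) ^ 2
      ≤ M ^ 2 * (2 * M ^ 2 * MDk n k f x ^ 2 + 2 * (Ek n k f x ^ 2 * MDk n k b x ^ 2)) / δ ^ 4 :=
        div_le_div₀ (by positivity) hnum (by positivity) hden
    _ = _ := by ring

theorem sum_integral_sq_TDkb_le {b f : (Fin n → ℝ) → ℝ} {δ M : ℝ} (hδ : 0 < δ)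
    (hb : Measurable b) (hbM : ∀ᵐ x ∂volume, |b x| ≤ M)
    (hEb : ∀ k : ℤ, ∀ᵐ x ∂volume, δ ≤ |Ek n k b x|) (hf : MemLp f 2 volume) (a : ℤ) (N : ℕ) :
    ∑ t ∈ range N, ∫ x, TDkb n b (a + t) f x ^ 2 ≤ 10 * M ^ 4 / δ ^ 4 * ∫ x, f x ^ 2 := by
  obtain ⟨x₀, hx₀⟩ := (hEb 0).exists
  have hM : 0 < M := hδ.trans_le (hx₀.trans (abs_Ek_le hbM 0 x₀))
  have hk (k : ℤ) : ∫ x, TDkb n b k f x ^ 2 ≤ 2 * M ^ 4 / δ ^ 4 * (∫ x, MDk n k f x ^ 2)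
      + 2 * M ^ 2 / δ ^ 4 * ∫ x, Ek n k f x ^ 2 * MDk n k b x ^ 2 := by
    have hD : Integrable (fun x => 2 * M ^ 4 / δ ^ 4 * MDk n k f x ^ 2) :=
      ((memLp_Ek hf (k + 1)).sub (memLp_Ek hf k)).integrable_sq.const_mul _
    have hC := (integrable_sq_Ek_mul_sq_MDk hbM hf k).const_mul (2 * M ^ 2 / δ ^ 4)
    rw [← integral_const_mul, ← integral_const_mul, ← integral_add hD hC]
    refine integral_mono_of_nonneg (ae_of_all _ fun _ => sq_nonneg _) (hD.add hC) ?_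
    filter_upwards [hbM, hEb k, hEb (k + 1)] with x hbx h₀ h₁
    exact sq_TDkb_le hδ hbx (abs_Ek_le hbM k x) h₀ h₁
  calc ∑ t ∈ range N, ∫ x, TDkb n b (a + t) f x ^ 2
      ≤ 2 * M ^ 4 / δ ^ 4 * (∑ t ∈ range N, ∫ x, MDk n (a + t) f x ^ 2)
        + 2 * M ^ 2 / δ ^ 4 * ∑ t ∈ range N, ∫ x, Ek n (a + t) f x ^ 2 * MDk n (a + t) b x ^ 2 := by
        rw [Finset.mul_sum, Finset.mul_sum, ← Finset.sum_add_distrib]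
        exact Finset.sum_le_sum fun t _ => hk (a + t)
    _ ≤ 2 * M ^ 4 / δ ^ 4 * (∫ x, f x ^ 2) + 2 * M ^ 2 / δ ^ 4 * (4 * M ^ 2 * ∫ x, f x ^ 2) := by
        gcongr
        · exact sum_integral_sq_MDk_le hf a N
        · exact sum_integral_sq_Ek_mul_sq_MDk_le hM hb hbM hf a N
    _ = 10 * M ^ 4 / δ ^ 4 * ∫ x, f x ^ 2 := by ring

theorem tsum_le_of_sum_range_le {u : ℤ → ℝ} {B : ℝ} (hu : ∀ k, 0 ≤ u k)
    (h : ∀ (a : ℤ) (N : ℕ), ∑ t ∈ range N, u (a + t) ≤ B) : ∑' k, u k ≤ B := by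
  refine Real.tsum_le_of_sum_le (Pi.le_def.2 hu) fun F => ?_
  obtain ⟨K, hK⟩ : ∃ K : ℕ, ∀ k ∈ F, |k| ≤ K :=
    ⟨(F.sup Int.natAbs), fun k hk => by
      rw [Int.abs_eq_natAbs]; exact_mod_cast Finset.le_sup (f := Int.natAbs) hk⟩
  have hF : F ⊆ (range (2 * K + 1)).image fun t : ℕ => -(K : ℤ) + t := by
    intro k hk
    have := abs_le.1 (hK k hk)
    exact Finset.mem_image.2 ⟨(k + K).toNat, Finset.mem_range.2 (by omega), by omega⟩
  calc ∑ k ∈ F, u k ≤ ∑ k ∈ (range (2 * K + 1)).image fun t : ℕ => -(K : ℤ) + t, u k :=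
        Finset.sum_le_sum_of_subset_of_nonneg hF fun k _ _ => hu k
    _ = ∑ t ∈ range (2 * K + 1), u (-(K : ℤ) + t) :=
        Finset.sum_image fun _ _ _ _ h => by simpa using h
    _ ≤ B := h _ _

end AdaptedSquareFunction

theorem statement6_general (n : ℕ) (δ M : ℝ) (hδ : 0 < δ) :
    ∃ C : ℝ, 0 < C ∧
      ∀ b : (Fin n → ℝ) → ℝ, Measurable b → (∀ᵐ x : Fin n → ℝ ∂volume, |b x| ≤ M) →
        (∀ k : ℤ, ∀ᵐ x : Fin n → ℝ ∂volume, δ ≤ |Ek n k b x|) →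
        ∀ f : (Fin n → ℝ) → ℝ, MemLp f 2 volume →
          ∑' k : ℤ, ∫ x : Fin n → ℝ, (TDkb n b k f x) ^ 2 ≤
            C * ∫ x : Fin n → ℝ, f x ^ 2 := by
  refine ⟨10 * M ^ 4 / δ ^ 4 + 1, by positivity, fun b hb hbM hEb f hf => ?_⟩
  calc ∑' k : ℤ, ∫ x, TDkb n b k f x ^ 2 ≤ 10 * M ^ 4 / δ ^ 4 * ∫ x, f x ^ 2 :=
        AdaptedSquareFunction.tsum_le_of_sum_range_le
          (fun k => integral_nonneg fun x => sq_nonneg (TDkb n b k f x))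
          (AdaptedSquareFunction.sum_integral_sq_TDkb_le hδ hb hbM hEb hf)
    _ ≤ (10 * M ^ 4 / δ ^ 4 + 1) * ∫ x, f x ^ 2 :=
        mul_le_mul_of_nonneg_right (le_add_of_nonneg_right zero_le_one)
          (integral_nonneg fun x => sq_nonneg (f x))

/-- square function estimate for the transposed adapted differences
`D_k^b = A_{k+1}^b - A_k^b` (Proposition 8.10). -/
theorem statement6 (n : ℕ) (δ M : ℝ) (hδ : 0 < δ) (hM : 0 ≤ M) :
    ∃ C : ℝ, 0 < C ∧
      ∀ b : (Fin n → ℝ) → ℝ, Measurable b → (∀ᵐ x : Fin n → ℝ ∂volume, |b x| ≤ M) →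
        (∀ k : ℤ, ∀ᵐ x : Fin n → ℝ ∂volume, δ ≤ |Ek n k b x|) →
        ∀ f : (Fin n → ℝ) → ℝ, MemLp f 2 volume →
          ∑' k : ℤ, ∫ x : Fin n → ℝ, (TDkb n b k f x) ^ 2 ≤
            C * ∫ x : Fin n → ℝ, f x ^ 2 :=
  statement6_general n δ M hδ
end

section
/- Let Q be a dyadic cube, and let b ∈ L²(Q) with supp b ⊆ Q, [b]_Q = 1, and ‖b‖_{L²(Q)} ≤ C₀|Q|^{1/2}. Then for every f ∈ L²(Q): ‖f‖_{L²(Q)} ≤ C (‖f − [f]_Q‖_{L²(Q)} + |Q|^{-1/2} |⟨f, b⟩|), where C depends only on C₀. -/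
/-!
Write `c = [f]_Q` and `g = f - c`. Then `‖f‖² = ‖g‖² + c²|Q|`, and, since `∫_Q b = |Q|`,
`⟨f, b⟩ = ⟨g, b⟩ + c|Q|`. Cauchy–Schwarz and `‖b‖ ≤ C₀|Q|^{1/2}` give
`|c| |Q|^{1/2} ≤ |Q|^{-1/2} |⟨f, b⟩| + C₀ ‖g‖`, so `‖f‖ ≤ ‖g‖ + |c| |Q|^{1/2}` yields the
claim with `C = 1 + C₀`.
-/

open MeasureTheory Set
open scoped Classical

namespace MeasureTheory

variable {α : Type*} [MeasurableSpace α] {μ : Measure α} {f b : α → ℝ}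

theorem abs_integral_mul_le_sqrt_integral_sq_mul_sqrt_integral_sq (hf : MemLp f 2 μ)
    (hb : MemLp b 2 μ) :
    |∫ x, f x * b x ∂μ| ≤ √(∫ x, f x ^ 2 ∂μ) * √(∫ x, b x ^ 2 ∂μ) := by
  have h_rpow (g : α → ℝ) : ∫ x, |g x| ^ (2 : ℝ) ∂μ = ∫ x, g x ^ 2 ∂μ := by
    simp only [Real.rpow_two, sq_abs]
  have h_two : ENNReal.ofReal 2 = 2 := by norm_num
  calc |∫ x, f x * b x ∂μ| ≤ ∫ x, ‖f x‖ * ‖b x‖ ∂μ := by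
        simpa only [Real.norm_eq_abs, abs_mul] using
          norm_integral_le_integral_norm (μ := μ) (fun x => f x * b x)
    _ ≤ (∫ x, ‖f x‖ ^ (2 : ℝ) ∂μ) ^ (1 / 2 : ℝ) * (∫ x, ‖b x‖ ^ (2 : ℝ) ∂μ) ^ (1 / 2 : ℝ) :=
        integral_mul_norm_le_Lp_mul_Lq Real.HolderConjugate.two_two (h_two ▸ hf) (h_two ▸ hb)
    _ = √(∫ x, f x ^ 2 ∂μ) * √(∫ x, b x ^ 2 ∂μ) := by
        simp only [Real.norm_eq_abs, h_rpow, Real.sqrt_eq_rpow]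

variable [IsFiniteMeasure μ]

theorem integral_sq_eq_integral_sq_sub_average_add (hf : MemLp f 2 μ) :
    ∫ x, f x ^ 2 ∂μ = ∫ x, (f x - ⨍ y, f y ∂μ) ^ 2 ∂μ + (⨍ y, f y ∂μ) ^ 2 * μ.real univ := by
  set c := ⨍ y, f y ∂μ
  have hfc : Integrable (fun x => 2 * c * (f x - c)) μ :=
    ((hf.integrable one_le_two).sub (integrable_const c)).const_mul _
  have h_mean : ∫ x, (f x - c) ∂μ = 0 := by
    rw [integral_sub (hf.integrable one_le_two) (integrable_const c), integral_const,
      ← measure_smul_average, sub_self]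
  calc ∫ x, f x ^ 2 ∂μ = ∫ x, ((f x - c) ^ 2 + (2 * c * (f x - c) + c ^ 2)) ∂μ := by
        congr 1 with x; ring
    _ = ∫ x, (f x - c) ^ 2 ∂μ + c ^ 2 * μ.real univ := by
        have hsq : Integrable (fun x => (f x - c) ^ 2) μ := (hf.sub (memLp_const c)).integrable_sq
        have hlin : Integrable (fun x => 2 * c * (f x - c) + c ^ 2) μ :=
          hfc.add (integrable_const _)
        rw [integral_add hsq hlin, integral_add hfc (integrable_const _), integral_const_mul,
          h_mean, integral_const, smul_eq_mul]
        ring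

theorem sqrt_integral_sq_le_add_abs_average_mul (hf : MemLp f 2 μ) :
    √(∫ x, f x ^ 2 ∂μ) ≤
      √(∫ x, (f x - ⨍ y, f y ∂μ) ^ 2 ∂μ) + |⨍ y, f y ∂μ| * √(μ.real univ) := by
  rw [integral_sq_eq_integral_sq_sub_average_add hf]
  set c := ⨍ y, f y ∂μ
  have h_var := Real.sq_sqrt (integral_nonneg (μ := μ) fun x => sq_nonneg (f x - c))
  have h_vol := Real.sq_sqrt (measureReal_nonneg (μ := μ) (s := univ))
  set A := √(∫ x, (f x - c) ^ 2 ∂μ)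
  set s := √(μ.real univ)
  have h_cross : 0 ≤ A * |c| * s := by positivity
  refine Real.sqrt_le_iff.mpr ⟨by positivity, ?_⟩
  nlinarith [sq_abs c]

theorem abs_mul_measureReal_univ_le (c : ℝ) (hf : MemLp f 2 μ) (hb : MemLp b 2 μ)
    (hb1 : ⨍ x, b x ∂μ = 1) :
    |c| * μ.real univ ≤
      |∫ x, f x * b x ∂μ| + √(∫ x, (f x - c) ^ 2 ∂μ) * √(∫ x, b x ^ 2 ∂μ) := by
  have h_int_b : ∫ x, b x ∂μ = μ.real univ := by
    rw [← measure_smul_average, hb1, smul_eq_mul, mul_one]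
  have h_split : c * μ.real univ = ∫ x, f x * b x ∂μ - ∫ x, (f x - c) * b x ∂μ := by
    have hfb : Integrable (fun x => f x * b x) μ := hf.integrable_mul hb
    simp only [sub_mul]
    rw [integral_sub hfb ((hb.integrable one_le_two).const_mul c),
      integral_const_mul, h_int_b, sub_sub_cancel]
  calc |c| * μ.real univ = |c * μ.real univ| := by rw [abs_mul, abs_of_nonneg measureReal_nonneg]
    _ ≤ |∫ x, f x * b x ∂μ| + |∫ x, (f x - c) * b x ∂μ| := h_split ▸ abs_sub _ _
    _ ≤ _ := by
      gcongr
      exact abs_integral_mul_le_sqrt_integral_sq_mul_sqrt_integral_sq (hf.sub (memLp_const c)) hb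

theorem sqrt_integral_sq_le_of_average_eq_one [NeZero μ] {C₀ : ℝ} (hf : MemLp f 2 μ)
    (hb : MemLp b 2 μ) (hb1 : ⨍ x, b x ∂μ = 1)
    (hbC : √(∫ x, b x ^ 2 ∂μ) ≤ C₀ * √(μ.real univ)) :
    √(∫ x, f x ^ 2 ∂μ) ≤
      (1 + C₀) * √(∫ x, (f x - ⨍ y, f y ∂μ) ^ 2 ∂μ) +
        (√(μ.real univ))⁻¹ * |∫ x, f x * b x ∂μ| := by
  set c := ⨍ y, f y ∂μ
  set A := √(∫ x, (f x - c) ^ 2 ∂μ)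
  set I := |∫ x, f x * b x ∂μ|
  set s := √(μ.real univ)
  have hs : 0 < s := Real.sqrt_pos.mpr measureReal_univ_pos
  have h_avg : |c| * (s * s) ≤ I + C₀ * A * s := by
    rw [Real.mul_self_sqrt measureReal_nonneg]
    calc |c| * μ.real univ ≤ I + A * √(∫ x, b x ^ 2 ∂μ) :=
          abs_mul_measureReal_univ_le c hf hb hb1
      _ ≤ I + A * (C₀ * s) := by gcongr
      _ = I + C₀ * A * s := by ring
  have h_avg' : |c| * s ≤ s⁻¹ * I + C₀ * A := by
    rw [← mul_le_mul_iff_of_pos_right hs]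
    calc |c| * s * s = |c| * (s * s) := mul_assoc _ _ _
      _ ≤ I + C₀ * A * s := h_avg
      _ = (s⁻¹ * I + C₀ * A) * s := by field_simp
  calc √(∫ x, f x ^ 2 ∂μ) ≤ A + |c| * s := sqrt_integral_sq_le_add_abs_average_mul hf
    _ ≤ A + (s⁻¹ * I + C₀ * A) := by gcongr
    _ = (1 + C₀) * A + s⁻¹ * I := by ring

end MeasureTheory

theorem DyadicCube.volume_set_s10 {n : ℕ} (Q : DyadicCube n) :
    volume Q.set = ENNReal.ofReal ((2 : ℝ) ^ (-Q.k)) ^ n := by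
  have h_pi : Q.set = univ.pi fun i => Ico ((Q.m i : ℝ) / 2 ^ Q.k) ((Q.m i + 1) / 2 ^ Q.k) := by
    ext x
    simp only [DyadicCube.set, mem_ofPred_eq, mem_univ_pi, mem_Ico]
    refine forall_congr' fun i => ?_
    have h2 : (0 : ℝ) < 2 ^ Q.k := zpow_pos two_pos _
    rw [div_le_iff₀ h2, lt_div_iff₀ h2, mul_comm (x i)]
  simp only [h_pi, volume_pi_pi, Real.volume_Ico, ← sub_div, add_sub_cancel_left, one_div,
    zpow_neg, Finset.prod_const, Finset.card_univ, Fintype.card_fin]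

instance DyadicCube.isFiniteMeasure_restrict_set {n : ℕ} (Q : DyadicCube n) :
    IsFiniteMeasure (volume.restrict Q.set) :=
  isFiniteMeasure_restrict.mpr (by simp [DyadicCube.volume_set_s10])

instance DyadicCube.neZero_restrict_set {n : ℕ} (Q : DyadicCube n) :
    NeZero (volume.restrict Q.set) :=
  ⟨by simp [Measure.restrict_eq_zero, DyadicCube.volume_set_s10, zpow_pos]⟩

theorem avgOn_eq_setAverage (n : ℕ) (s : Set (Fin n → ℝ)) (f : (Fin n → ℝ) → ℝ) :
    avgOn n s f = ⨍ x in s, f x := by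
  rw [avgOn, setAverage_eq, measureReal_def, smul_eq_mul]

/-- Lemma 8.35. -/
theorem statement10 (C₀ : ℝ) (hC₀ : 0 < C₀) :
    ∃ C : ℝ, 0 < C ∧
      ∀ (n : ℕ) (Q : DyadicCube n) (b f : (Fin n → ℝ) → ℝ),
        MemLp b 2 (volume.restrict Q.set) → MemLp f 2 (volume.restrict Q.set) →
        (∀ x ∉ Q.set, b x = 0) →
        avgOn n Q.set b = 1 →
        Real.sqrt (∫ x in Q.set, b x ^ 2) ≤ C₀ * Real.sqrt (volume Q.set).toReal →
        Real.sqrt (∫ x in Q.set, f x ^ 2) ≤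
          C * (Real.sqrt (∫ x in Q.set, (f x - avgOn n Q.set f) ^ 2) +
            (Real.sqrt (volume Q.set).toReal)⁻¹ * |∫ x in Q.set, f x * b x|) := by
  refine ⟨1 + C₀, by linarith, fun n Q b f hb hf _ hb1 hbC => ?_⟩
  have h_vol : (volume Q.set).toReal = (volume.restrict Q.set).real univ := by
    rw [measureReal_restrict_apply_univ, measureReal_def]
  rw [avgOn_eq_setAverage] at hb1 ⊢
  rw [h_vol] at hbC ⊢
  refine (sqrt_integral_sq_le_of_average_eq_one hf hb hb1 hbC).trans ?_
  rw [mul_add]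
  exact add_le_add le_rfl (le_mul_of_one_le_left (by positivity) (by linarith))
end
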